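/- arXiv:2208.08550 — 4 statements merged into one kernel-verified Lean document; each statement's English description precedes it below -/
import Mathlib

section
/- Let F be an infinite field and let I be the ideal of Z_2-graded identities of UT_2(F)^{(-)} with its canonical Z_2-grading. If f = [z, a_1 y_1, …, a_n y_n] and g = [z, a'_1 y_1, …, a'_m y_m] are elements of B and V_f = (a_1,…,a_n) ≤ V_g = (a'_1,…,a'_m) in the Higman order on finite sequences of positive integers, then g is a consequence of f modulo I, i.e. g ∈ ⟨{f} ∪ I⟩, the smallest T_{Z_2}-ideal containing f and I. -/
open FreeLieAlgebra

attribute [local instance 100] LieRing.ofAssociativeRing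

/-- The free `ℤ/n`-graded Lie algebra over `F`: the free Lie algebra on countably many
variables of each homogeneous degree `g : ZMod n`; the variable `(g, i)` is the `i`-th
variable of degree `g`. -/
abbrev FreeGLie (F : Type) [Field F] (n : ℕ) := FreeLieAlgebra F (ZMod n × ℕ)

/-- Homogeneous Lie monomials (bracket words) of degree `g`. -/
inductive HomWord (F : Type) [Field F] (n : ℕ) : ZMod n → FreeGLie F n → Prop
  | of (g : ZMod n) (i : ℕ) : HomWord F n g (FreeLieAlgebra.of F (g, i))
  | bracket {g h : ZMod n} {x y : FreeGLie F n} :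
      HomWord F n g x → HomWord F n h y → HomWord F n (g + h) ⁅x, y⁆

/-- The homogeneous component of degree `g` of the free graded Lie algebra. -/
noncomputable def homComp (F : Type) [Field F] (n : ℕ) (g : ZMod n) : Submodule F (FreeGLie F n) :=
  Submodule.span F {x | HomWord F n g x}

/-- A graded substitution sends each variable of degree `g` to a homogeneous element
of degree `g`; it induces a grading-preserving endomorphism via `FreeLieAlgebra.lift`,
and every grading-preserving endomorphism arises this way. -/
def IsGradedSubst (F : Type) [Field F] (n : ℕ) (s : ZMod n × ℕ → FreeGLie F n) : Prop :=
  ∀ g i, s (g, i) ∈ homComp F n g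

/-- `S` is a `T`-ideal: the carrier of a Lie ideal of the free graded Lie algebra which is
stable under all grading-preserving endomorphisms. -/
structure IsTIdeal (F : Type) [Field F] (n : ℕ) (S : Set (FreeGLie F n)) : Prop where
  isIdeal : ∃ J : LieIdeal F (FreeGLie F n), S = ↑J
  substClosed : ∀ s, IsGradedSubst F n s → ∀ x ∈ S, FreeLieAlgebra.lift F s x ∈ S

/-- The smallest `T`-ideal containing `S`. -/
def TClosure (F : Type) [Field F] (n : ℕ) (S : Set (FreeGLie F n)) : Set (FreeGLie F n) :=
  ⋂₀ {T | IsTIdeal F n T ∧ S ⊆ T}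

/-- The degree-`g` component of the canonical `ZMod n`-grading of `UT_n(F)⁽⁻⁾`:
the span of the matrix units `e_{ij}` with `i ≤ j` and `j - i = g` in `ZMod n`. -/
def Lcomp (F : Type) [Field F] (n : ℕ) (g : ZMod n) : Submodule F (Matrix (Fin n) (Fin n) F) :=
  Submodule.span F {A | ∃ i j : Fin n, i ≤ j ∧ ((j : ℕ) : ZMod n) - ((i : ℕ) : ZMod n) = g ∧
    A = Matrix.single i j 1}

/-- The set of `ZMod n`-graded identities of `UT_n(F)⁽⁻⁾` (with commutator bracket),
i.e. the elements of the free graded Lie algebra vanishing under every substitution that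
sends each variable of degree `g` into the component `Lcomp F n g`. -/
def gradedId (F : Type) [Field F] (n : ℕ) : Set (FreeGLie F n) :=
  {f | ∀ v : ZMod n × ℕ → Matrix (Fin n) (Fin n) F,
    (∀ g i, v (g, i) ∈ Lcomp F n g) → FreeLieAlgebra.lift F v f = 0}

/-- The left-normed bracket `[x, l₁, l₂, …]`. -/
noncomputable def lnw (F : Type) [Field F] (n : ℕ) (x : FreeGLie F n)
    (l : List (FreeGLie F n)) : FreeGLie F n :=
  l.foldl (fun a b => ⁅a, b⁆) x

/-- The degree-0 variable `y_i`. -/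
noncomputable def yv (F : Type) [Field F] (n : ℕ) (i : ℕ) : FreeGLie F n :=
  FreeLieAlgebra.of F ((0 : ZMod n), i)

/-- The list `y_off, …, y_off (a₁ times), y_{off+1}, … (a₂ times), …` of degree-0
variables with multiplicities given by the list `a`. -/
noncomputable def yblock (F : Type) [Field F] (n : ℕ) : ℕ → List ℕ → List (FreeGLie F n)
  | _, [] => []
  | off, a :: rest => List.replicate a (yv F n off) ++ yblock F n (off + 1) rest

/-- The element `[z, a₁y₁, …, aₘyₘ]` of the set `B` (here `z` is the degree-1 variable
`(1,0)` and the `yᵢ` are degree-0 variables), for an exponent list `a = (a₁,…,aₘ)`. -/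
noncomputable def Bel (F : Type) [Field F] (a : List ℕ) : FreeGLie F 2 :=
  lnw F 2 (FreeLieAlgebra.of F ((1 : ZMod 2), 0)) (yblock F 2 0 a)

/-! The degree-0 component of `UT_n(F)⁽⁻⁾` consists of diagonal matrices and is commutative, so
modulo the graded identities the degree-0 variables following `z` in a left-normed commutator may
be permuted: whether `[z, y_{j₁}, …, y_{jₖ}]` lies in a `T`-ideal containing the identities depends
only on the multiset `{j₁, …, jₖ}`. The substitution `z ↦ [z, y_k]` enlarges this multiset by `k`,
and the renaming `y_j ↦ y_{ρ j}` pushes it forward along `ρ`. A Higman embedding `φ` of `V_f` into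
`V_g` gives a `ρ` (sending the block of `f` with index `i` to the block of `g` with index `φ i`)
that pushes the multiset of `f` into that of `g`. -/

section LieFoldl

variable {L : Type*} [LieRing L]

def lieFoldl (x : L) (l : List L) : L := l.foldl (fun a b => ⁅a, b⁆) x

@[simp] lemma lieFoldl_cons (x y : L) (l : List L) : lieFoldl x (y :: l) = lieFoldl ⁅x, y⁆ l :=
  rfl

lemma lieFoldl_eq_of_perm {l l' : List L} (h : l.Perm l') (hl : ∀ a ∈ l, ∀ b ∈ l, ⁅a, b⁆ = 0)
    (x : L) : lieFoldl x l = lieFoldl x l' := by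
  induction h generalizing x with
  | nil => rfl
  | cons a _ ih => exact ih (fun p hp q hq => hl p (.tail _ hp) q (.tail _ hq)) _
  | swap a b l =>
      have hba : ⁅b, a⁆ = 0 := hl b (by simp) a (by simp)
      have hswap : ⁅⁅x, b⁆, a⁆ = ⁅⁅x, a⁆, b⁆ := by
        have hjacobi := leibniz_lie x b a
        rw [hba, lie_zero, ← lie_skew b, ← sub_eq_add_neg] at hjacobi
        exact sub_eq_zero.1 hjacobi.symm
      simp only [lieFoldl_cons, hswap]
  | trans h₁ _ ih₁ ih₂ =>
      exact (ih₁ hl x).trans (ih₂ (fun p hp q hq => hl p (h₁.mem_iff.2 hp) q (h₁.mem_iff.2 hq)) x)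

lemma LieHom.map_lieFoldl {R M : Type*} [CommRing R] [LieRing M] [LieAlgebra R L]
    [LieAlgebra R M] (f : L →ₗ⁅R⁆ M) (x : L) (l : List L) :
    f (lieFoldl x l) = lieFoldl (f x) (l.map f) := by
  induction l generalizing x with
  | nil => rfl
  | cons y l ih => simp only [lieFoldl_cons, List.map_cons, ih, LieHom.map_lie]

end LieFoldl

section DiagonalComponent

variable {F : Type} [Field F] {n : ℕ}

lemma Lcomp_zero_le_range_diagonal :
    Lcomp F n 0 ≤ LinearMap.range (Matrix.diagonalLinearMap (Fin n) F F) := by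
  refine Submodule.span_le.2 ?_
  rintro _ ⟨i, j, -, hij, rfl⟩
  have : i = j := by
    rw [sub_eq_zero, ZMod.natCast_eq_natCast_iff', Nat.mod_eq_of_lt i.2,
      Nat.mod_eq_of_lt j.2] at hij
    exact Fin.ext hij.symm
  subst this
  exact ⟨Pi.single i 1, Matrix.diagonal_single i 1⟩

lemma lie_eq_zero_of_mem_Lcomp_zero {A B : Matrix (Fin n) (Fin n) F}
    (hA : A ∈ Lcomp F n 0) (hB : B ∈ Lcomp F n 0) : ⁅A, B⁆ = 0 := by
  obtain ⟨d, rfl⟩ := Lcomp_zero_le_range_diagonal hA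
  obtain ⟨e, rfl⟩ := Lcomp_zero_le_range_diagonal hB
  simp [Ring.lie_def, Matrix.diagonal_mul_diagonal, mul_comm]

end DiagonalComponent

section FreeGLie

variable {F : Type} [Field F] {n : ℕ}

lemma lnw_eq_lieFoldl (x : FreeGLie F n) (l : List (FreeGLie F n)) :
    lnw F n x l = lieFoldl x l :=
  rfl

lemma lnw_perm_sub_mem_gradedId (x : FreeGLie F n) {l l' : List ℕ} (h : l.Perm l') :
    lnw F n x (l.map (yv F n)) - lnw F n x (l'.map (yv F n)) ∈ gradedId F n := by
  intro v hv
  rw [map_sub, lnw_eq_lieFoldl, lnw_eq_lieFoldl, LieHom.map_lieFoldl, LieHom.map_lieFoldl,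
    sub_eq_zero]
  refine lieFoldl_eq_of_perm ((h.map _).map _) ?_ _
  simp only [List.map_map, List.mem_map, Function.comp_apply]
  rintro _ ⟨j, -, rfl⟩ _ ⟨k, -, rfl⟩
  simp only [yv, FreeLieAlgebra.lift_of_apply]
  exact lie_eq_zero_of_mem_Lcomp_zero (hv 0 j) (hv 0 k)

noncomputable def ySubst (ρ : ℕ → ℕ) (u : ZMod n × ℕ → FreeGLie F n) :
    ZMod n × ℕ → FreeGLie F n :=
  fun gi => if gi.1 = 0 then yv F n (ρ gi.2) else u gi

variable {ρ : ℕ → ℕ} {u : ZMod n × ℕ → FreeGLie F n}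

lemma isGradedSubst_ySubst (hu : ∀ g i, g ≠ 0 → u (g, i) ∈ homComp F n g) :
    IsGradedSubst F n (ySubst ρ u) := by
  intro g i
  by_cases hg : g = 0
  · subst hg
    dsimp only [ySubst]
    rw [if_pos rfl]
    exact Submodule.subset_span (HomWord.of 0 (ρ i))
  · simpa [ySubst, hg] using hu g i hg

lemma lift_ySubst_of {g : ZMod n} (hg : g ≠ 0) (i : ℕ) :
    FreeLieAlgebra.lift F (ySubst ρ u) (FreeLieAlgebra.of F (g, i)) = u (g, i) := by
  simp [ySubst, hg]

lemma lift_ySubst_lnw (x : FreeGLie F n) (l : List ℕ) :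
    FreeLieAlgebra.lift F (ySubst ρ u) (lnw F n x (l.map (yv F n))) =
      lnw F n (FreeLieAlgebra.lift F (ySubst ρ u) x) ((l.map ρ).map (yv F n)) := by
  rw [lnw_eq_lieFoldl, LieHom.map_lieFoldl, List.map_map, List.map_map]
  congr 2
  ext j
  simp [yv, ySubst]

end FreeGLie

namespace IsTIdeal

variable {F : Type} [Field F] {n : ℕ} {T : Set (FreeGLie F n)}

lemma lnw_mem_of_perm (hT : IsTIdeal F n T) (hI : gradedId F n ⊆ T) (x : FreeGLie F n)
    {l l' : List ℕ} (h : l.Perm l') (hl : lnw F n x (l.map (yv F n)) ∈ T) :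
    lnw F n x (l'.map (yv F n)) ∈ T := by
  obtain ⟨J, rfl⟩ := hT.isIdeal
  simpa using sub_mem hl (hI (lnw_perm_sub_mem_gradedId x h))

variable {g : ZMod n} (i : ℕ)

lemma lnw_map_mem (hT : IsTIdeal F n T) (hg : g ≠ 0) (ρ : ℕ → ℕ) {l : List ℕ}
    (hl : lnw F n (FreeLieAlgebra.of F (g, i)) (l.map (yv F n)) ∈ T) :
    lnw F n (FreeLieAlgebra.of F (g, i)) ((l.map ρ).map (yv F n)) ∈ T := by
  have hu : ∀ g i, g ≠ 0 → FreeLieAlgebra.of F (g, i) ∈ homComp F n g :=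
    fun g i _ => Submodule.subset_span (HomWord.of g i)
  simpa [lift_ySubst_lnw, lift_ySubst_of hg] using
    hT.substClosed _ (isGradedSubst_ySubst (ρ := ρ) hu) _ hl

lemma lnw_cons_mem (hT : IsTIdeal F n T) (hg : g ≠ 0) (k : ℕ) {l : List ℕ}
    (hl : lnw F n (FreeLieAlgebra.of F (g, i)) (l.map (yv F n)) ∈ T) :
    lnw F n (FreeLieAlgebra.of F (g, i)) ((k :: l).map (yv F n)) ∈ T := by
  set u : ZMod n × ℕ → FreeGLie F n := fun gi => ⁅FreeLieAlgebra.of F gi, yv F n k⁆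
  have hu : ∀ g i, g ≠ 0 → u (g, i) ∈ homComp F n g := by
    intro g i _
    have := HomWord.bracket (HomWord.of (F := F) g i) (HomWord.of 0 k)
    rw [add_zero] at this
    exact Submodule.subset_span this
  have := hT.substClosed _ (isGradedSubst_ySubst (ρ := id) hu) _ hl
  rwa [lift_ySubst_lnw, lift_ySubst_of hg, List.map_id] at this

lemma lnw_mem_of_subperm (hT : IsTIdeal F n T) (hI : gradedId F n ⊆ T) (hg : g ≠ 0)
    {l l' : List ℕ} (h : l.Subperm l')
    (hl : lnw F n (FreeLieAlgebra.of F (g, i)) (l.map (yv F n)) ∈ T) :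
    lnw F n (FreeLieAlgebra.of F (g, i)) (l'.map (yv F n)) ∈ T := by
  obtain ⟨l₀, hl₀, hsub⟩ := h
  obtain ⟨m, hm⟩ := hsub.exists_perm_append
  have hprepend : ∀ m : List ℕ,
      lnw F n (FreeLieAlgebra.of F (g, i)) ((m ++ l).map (yv F n)) ∈ T := by
    intro m
    induction m with
    | nil => exact hl
    | cons k m ih => exact hT.lnw_cons_mem i hg k ih
  exact hT.lnw_mem_of_perm hI _
    ((List.perm_append_comm.trans (hl₀.symm.append_right m)).trans hm.symm) (hprepend m)

end IsTIdeal

section Higman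

def yIdx : ℕ → List ℕ → List ℕ
  | _, [] => []
  | o, a :: rest => List.replicate a o ++ yIdx (o + 1) rest

lemma yblock_eq_map_yIdx {F : Type} [Field F] (n : ℕ) (o : ℕ) (a : List ℕ) :
    yblock F n o a = (yIdx o a).map (yv F n) := by
  induction a generalizing o with
  | nil => rfl
  | cons a rest ih => simp [yblock, yIdx, ih]

lemma le_of_mem_yIdx {o j : ℕ} {a : List ℕ} (h : j ∈ yIdx o a) : o ≤ j := by
  induction a generalizing o with
  | nil => simp [yIdx] at h
  | cons a rest ih =>
      rcases List.mem_append.1 h with h | h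
      · exact (List.eq_of_mem_replicate h).ge
      · exact (Nat.le_succ o).trans (ih h)

lemma exists_map_yIdx_subperm {a b : List ℕ} (h : List.SublistForall₂ (· ≤ ·) a b) (o o' : ℕ) :
    ∃ ρ : ℕ → ℕ, ((yIdx o a).map ρ).Subperm (yIdx o' b) := by
  induction h generalizing o o' with
  | nil => exact ⟨id, by simp [yIdx]⟩
  | @cons a₁ a₂ l₁ l₂ hle _ ih =>
      obtain ⟨ρ, hρ⟩ := ih (o + 1) (o' + 1)
      refine ⟨fun j => if j = o then o' else ρ j, ?_⟩
      have hrest : (yIdx (o + 1) l₁).map (fun j => if j = o then o' else ρ j) =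
          (yIdx (o + 1) l₁).map ρ :=
        List.map_congr_left fun j hj => if_neg (by have := le_of_mem_yIdx hj; omega)
      simp only [yIdx, List.map_append, List.map_replicate, hrest]
      exact ((List.replicate_sublist_replicate o').2 hle).subperm.append hρ
  | @cons_right a₂ l₁ l₂ _ ih =>
      obtain ⟨ρ, hρ⟩ := ih o (o' + 1)
      exact ⟨ρ, hρ.trans (List.sublist_append_right _ _).subperm⟩

end Higman

theorem stmt0_general (F : Type) [Field F] (a b : List ℕ)
    (hab : List.SublistForall₂ (· ≤ ·) a b) :
    Bel F b ∈ TClosure F 2 ({Bel F a} ∪ gradedId F 2) := by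
  rw [TClosure, Set.mem_sInter]
  rintro T ⟨hT, hST⟩
  have hz : (1 : ZMod 2) ≠ 0 := by decide
  obtain ⟨ρ, hρ⟩ := exists_map_yIdx_subperm hab 0 0
  have hf : lnw F 2 (FreeLieAlgebra.of F (1, 0)) ((yIdx 0 a).map (yv F 2)) ∈ T := by
    rw [← yblock_eq_map_yIdx]
    exact hST (Or.inl rfl)
  rw [Bel, yblock_eq_map_yIdx]
  exact hT.lnw_mem_of_subperm 0 (fun x hx => hST (Or.inr hx)) hz hρ (hT.lnw_map_mem 0 hz ρ hf)

/-- If `f = [z, a₁y₁,…,aₘyₘ]` and `g = [z, a'₁y₁,…,a'ₘyₘ]` lie in `B`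
and `V_f ≤ V_g` in the Higman order, then `g` is a consequence of `f` modulo the ideal
`I` of `ZMod 2`-graded identities of `UT₂(F)⁽⁻⁾`. -/
theorem stmt0 (F : Type) [Field F] [Infinite F] (a b : List ℕ)
    (ha₀ : a ≠ []) (ha : ∀ x ∈ a, 0 < x) (hb₀ : b ≠ []) (hb : ∀ x ∈ b, 0 < x)
    (hab : List.SublistForall₂ (· ≤ ·) a b) :
    Bel F b ∈ TClosure F 2 ({Bel F a} ∪ gradedId F 2) :=
  stmt0_general F a b hab
end

section
/- Let F be an infinite field and let I = T_{Z_2}(UT_2(F)^{(-)}) be the ideal of Z_2-graded identities of UT_2(F)^{(-)} with its canonical Z_2-grading. Then every T_{Z_2}-ideal J of the free Z_2-graded Lie algebra with I ⊆ J is finitely generated as a T_{Z_2}-ideal; in particular T_{Z_2}(UT_2(F)^{(-)}) has the Specht property. -/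
open FreeLieAlgebra

attribute [local instance 100] LieRing.ofAssociativeRing

/-!
Let `C` be the `T`-ideal generated by `⁅y₀, y₁⁆` and `⁅z₀, z₁⁆`, both graded identities of
`UT₂(F)⁽⁻⁾`. Modulo `C` every element is a linear combination of the variables `y_i` and of the
words `⁅z_i, y_{j₁}, …, y_{j_k}⁆` with `j₁ ≤ … ≤ j_k`, indexed by `i` and the multiset
`μ = {j₁, …, j_k}`. Substituting `t • x` for each variable `x` multiplies such a word by the
corresponding monomial in `t`; as `F` is infinite these monomials are linearly independent
functions, so a `T`-ideal containing a linear combination of words contains each of its terms.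
Hence a `T`-ideal `J ⊇ C` is determined by the words it contains. The word of `μ` yields the word
of `ν` as soon as a renaming of `μ` is a submultiset of `ν` (rename the `y`'s, then substitute a
longer word for `z_i`, and reorder the `y`'s modulo `⁅y₀, y₁⁆`), and by Higman's lemma this
relation is a well-quasi-order. So finitely many words of `J`, together with `⁅y₀, y₁⁆`,
`⁅z₀, z₁⁆` and `y₀` (if it lies in `J`), generate `J`.
-/

namespace IsTIdeal

variable {F : Type} [Field F] {n : ℕ} {T : Set (FreeGLie F n)}

theorem zero_mem (hT : IsTIdeal F n T) : (0 : FreeGLie F n) ∈ T := by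
  obtain ⟨K, rfl⟩ := hT.isIdeal; exact K.zero_mem

theorem add_mem (hT : IsTIdeal F n T) {a b : FreeGLie F n} (ha : a ∈ T) (hb : b ∈ T) :
    a + b ∈ T := by
  obtain ⟨K, rfl⟩ := hT.isIdeal; exact K.add_mem ha hb

theorem smul_mem (hT : IsTIdeal F n T) (c : F) {a : FreeGLie F n} (ha : a ∈ T) : c • a ∈ T := by
  obtain ⟨K, rfl⟩ := hT.isIdeal; exact K.smul_mem c ha

theorem lie_mem_right (hT : IsTIdeal F n T) (x : FreeGLie F n) {a : FreeGLie F n} (ha : a ∈ T) :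
    ⁅x, a⁆ ∈ T := by
  obtain ⟨K, rfl⟩ := hT.isIdeal; exact K.lie_mem ha

theorem lie_mem_left (hT : IsTIdeal F n T) (x : FreeGLie F n) {a : FreeGLie F n} (ha : a ∈ T) :
    ⁅a, x⁆ ∈ T := by
  obtain ⟨K, rfl⟩ := hT.isIdeal; exact lie_mem_left F _ K _ _ ha

theorem mem_iff_of_sub_mem (hT : IsTIdeal F n T) {a b : FreeGLie F n} (hab : a - b ∈ T) :
    a ∈ T ↔ b ∈ T := by
  obtain ⟨K, rfl⟩ := hT.isIdeal
  exact ⟨fun ha => by simpa using K.sub_mem ha hab, fun hb => by simpa using K.add_mem hab hb⟩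

end IsTIdeal

section TClosure

variable {F : Type} [Field F] {n : ℕ}

theorem isTIdeal_sInter {𝒯 : Set (Set (FreeGLie F n))} (h𝒯 : ∀ T ∈ 𝒯, IsTIdeal F n T) :
    IsTIdeal F n (⋂₀ 𝒯) where
  isIdeal := ⟨{ carrier := ⋂₀ 𝒯
                add_mem' := fun ha hb T hT => (h𝒯 T hT).add_mem (ha T hT) (hb T hT)
                zero_mem' := fun T hT => (h𝒯 T hT).zero_mem
                smul_mem' := fun c _ ha T hT => (h𝒯 T hT).smul_mem c (ha T hT)
                lie_mem := fun ha T hT => (h𝒯 T hT).lie_mem_right _ (ha T hT) }, rfl⟩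
  substClosed s hs _ hx T hT := (h𝒯 T hT).substClosed s hs _ (hx T hT)

theorem isTIdeal_TClosure (S : Set (FreeGLie F n)) : IsTIdeal F n (TClosure F n S) :=
  isTIdeal_sInter fun _ hT => hT.1

theorem subset_TClosure (S : Set (FreeGLie F n)) : S ⊆ TClosure F n S :=
  Set.subset_sInter fun _ hT => hT.2

theorem TClosure_subset {S T : Set (FreeGLie F n)} (hT : IsTIdeal F n T) (hST : S ⊆ T) :
    TClosure F n S ⊆ T :=
  Set.sInter_subset_of_mem ⟨hT, hST⟩

end TClosure

section Substitution

variable {F : Type} [Field F] {n : ℕ}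

theorem of_mem_homComp (p : ZMod n × ℕ) : of F p ∈ homComp F n p.1 :=
  Submodule.subset_span (HomWord.of p.1 p.2)

theorem isGradedSubst_of : IsGradedSubst F n (of F) := fun g i => of_mem_homComp (g, i)

theorem IsGradedSubst.update {s : ZMod n × ℕ → FreeGLie F n} (hs : IsGradedSubst F n s)
    (p : ZMod n × ℕ) {a : FreeGLie F n} (ha : a ∈ homComp F n p.1) :
    IsGradedSubst F n (Function.update s p a) := by
  intro g i
  rcases eq_or_ne (g, i) p with rfl | hne
  · rwa [Function.update_self]
  · rw [Function.update_of_ne hne]; exact hs g i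

theorem IsTIdeal.lie_mem_of_lie_of_mem {T : Set (FreeGLie F n)} (hT : IsTIdeal F n T)
    {g : ZMod n} {i j : ℕ} (hij : i ≠ j) (h : ⁅of F (g, i), of F (g, j)⁆ ∈ T)
    {a b : FreeGLie F n} (ha : a ∈ homComp F n g) (hb : b ∈ homComp F n g) : ⁅a, b⁆ ∈ T := by
  have hs := (isGradedSubst_of.update (g, i) ha).update (g, j) hb
  have hne : ((g, i) : ZMod n × ℕ) ≠ (g, j) := by simp [hij]
  simpa [lift_of_apply, Function.update_of_ne hne] using hT.substClosed _ hs _ h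

theorem IsTIdeal.of_mem_of_of_mem {T : Set (FreeGLie F n)} (hT : IsTIdeal F n T)
    {g : ZMod n} {i : ℕ} (h : of F (g, i) ∈ T) (j : ℕ) : of F (g, j) ∈ T := by
  simpa [lift_of_apply] using
    hT.substClosed _ (isGradedSubst_of.update (g, i) (of_mem_homComp (g, j))) _ h

end Substitution

section LeftNormed

variable {F : Type} [Field F] {n : ℕ} (K : LieIdeal F (FreeGLie F n))

theorem lnw_cons (x a : FreeGLie F n) (l : List (FreeGLie F n)) :
    lnw F n x (a :: l) = lnw F n ⁅x, a⁆ l :=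
  rfl

theorem lnw_append (x : FreeGLie F n) (l l' : List (FreeGLie F n)) :
    lnw F n x (l ++ l') = lnw F n (lnw F n x l) l' :=
  List.foldl_append

theorem LieHom.map_lnw (φ : FreeGLie F n →ₗ⁅F⁆ FreeGLie F n) (x : FreeGLie F n)
    (l : List (FreeGLie F n)) : φ (lnw F n x l) = lnw F n (φ x) (l.map φ) := by
  induction l generalizing x with
  | nil => rfl
  | cons a l ih => exact (ih ⁅x, a⁆).trans (by rw [φ.map_lie]; rfl)

theorem lnw_smul_map_smul {ι : Type*} (c : F) (x : FreeGLie F n)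
    (a : ι → F) (y : ι → FreeGLie F n) (l : List ι) :
    lnw F n (c • x) (l.map fun k => a k • y k) = (c * (l.map a).prod) • lnw F n x (l.map y) := by
  induction l generalizing c x with
  | nil => simp [lnw]
  | cons k l ih =>
    simp only [List.map_cons, List.prod_cons, lnw_cons]
    rw [smul_lie, lie_smul, smul_smul, ih, mul_assoc]

theorem lnw_sub_lnw_mem {u v : FreeGLie F n} (huv : u - v ∈ K) (l : List (FreeGLie F n)) :
    lnw F n u l - lnw F n v l ∈ K := by
  induction l generalizing u v with
  | nil => exact huv
  | cons a l ih => exact ih (by rw [← sub_lie]; exact lie_mem_left F _ K _ a huv)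

theorem lnw_sub_lnw_mem_of_perm {S : Set (FreeGLie F n)} (hS : ∀ a ∈ S, ∀ b ∈ S, ⁅a, b⁆ ∈ K)
    {l l' : List (FreeGLie F n)} (hl : l.Perm l') (hlS : ∀ a ∈ l, a ∈ S) (x : FreeGLie F n) :
    lnw F n x l - lnw F n x l' ∈ K := by
  induction hl generalizing x with
  | nil => simp
  | cons a _ ih => exact ih (fun b hb => hlS b (List.mem_cons_of_mem a hb)) _
  | swap a b l =>
    refine lnw_sub_lnw_mem K ?_ l
    have hjacobi : ⁅⁅x, b⁆, a⁆ - ⁅⁅x, a⁆, b⁆ = ⁅x, ⁅b, a⁆⁆ := by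
      rw [leibniz_lie, ← lie_skew b ⁅x, a⁆]; abel
    change ⁅⁅x, b⁆, a⁆ - ⁅⁅x, a⁆, b⁆ ∈ K
    rw [hjacobi]
    exact K.lie_mem (hS b (hlS b (by simp)) a (hlS a (by simp)))
  | trans h₁₂ _ ih₁₂ ih₂₃ =>
    simpa using K.add_mem (ih₁₂ hlS x) (ih₂₃ (fun a ha => hlS a (h₁₂.symm.subset ha)) x)

end LeftNormed

theorem FreeLieAlgebra.eq_top_of_of_mem {R X : Type*} [CommRing R]
    (A : LieSubalgebra R (FreeLieAlgebra R X)) (h : ∀ x, of R x ∈ A) : A = ⊤ := by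
  let φ : FreeLieAlgebra R X →ₗ⁅R⁆ A := lift R fun x => ⟨of R x, h x⟩
  have hφ : A.incl.comp φ = LieHom.id := hom_ext fun x => by simp [φ]
  refine eq_top_iff.2 fun y _ => ?_
  have hy : A.incl (φ y) = y := by rw [← LieHom.comp_apply, hφ]; rfl
  exact hy ▸ (φ y).2

section Separation

variable {F : Type} [Field F]

theorem span_range_eval_eq_top {ι X : Type*} [Fintype ι] {f : ι → X → F}
    (hf : LinearIndependent F f) : Submodule.span F (Set.range fun x i => f i x) = ⊤ := by
  classical
  by_contra hne
  obtain ⟨φ, hφ, hφspan⟩ :=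
    Submodule.exists_dual_map_eq_bot_of_lt_top (lt_top_iff_ne_top.2 hne) inferInstance
  have hφeval : ∀ x, φ (fun i => f i x) = 0 := fun x => by
    have h := Submodule.mem_map_of_mem (f := φ)
      (Submodule.subset_span (Set.mem_range_self (f := fun x i => f i x) x))
    rwa [hφspan, Submodule.mem_bot] at h
  refine hφ (LinearMap.ext fun v => ?_)
  have hcoeff := Fintype.linearIndependent_iff.1 hf (fun i => φ fun j => if i = j then 1 else 0)
    (funext fun x => by
      have h := hφeval x
      rw [LinearMap.pi_apply_eq_sum_univ φ] at h
      simpa [Finset.sum_apply, mul_comm] using h)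
  simp [LinearMap.pi_apply_eq_sum_univ φ v, hcoeff]

theorem smul_mem_span_range_of_linearIndependent {ι X M : Type*} [AddCommGroup M] [Module F M]
    {w : ι → M} {χ : ι → X → F} (hχ : LinearIndependent F χ) (φ : X → M →ₗ[F] M)
    (hφ : ∀ x i, φ x (w i) = χ i x • w i) (c : ι →₀ F) (i : ι) :
    c i • w i ∈ Submodule.span F (Set.range fun x => φ x (Finsupp.linearCombination F w c)) := by
  classical
  by_cases hi : i ∈ c.support
  swap
  · simp [Finsupp.notMem_support_iff.1 hi]
  let L : (c.support → F) →ₗ[F] M := Fintype.linearCombination F fun j => c j • w j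
  have hL : ∀ x, L (fun j => χ j x) = φ x (Finsupp.linearCombination F w c) := fun x => by
    rw [Fintype.linearCombination_apply, Finsupp.linearCombination_apply, Finsupp.sum, map_sum]
    refine (Finset.sum_coe_sort c.support fun j => χ j x • c j • w j).trans
      (Finset.sum_congr rfl fun j _ => ?_)
    rw [map_smul, hφ, smul_comm]
  have htop : Submodule.span F (Set.range fun x (j : c.support) => χ j x) = ⊤ :=
    span_range_eval_eq_top (hχ.comp _ Subtype.val_injective)
  have hsingle : L (Pi.single ⟨i, hi⟩ 1) ∈
      (Submodule.span F (Set.range fun x (j : c.support) => χ j x)).map L :=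
    Submodule.mem_map_of_mem (by rw [htop]; trivial)
  rw [Submodule.map_span, ← Set.range_comp, Fintype.linearCombination_apply_single, one_smul]
    at hsingle
  simpa [Function.comp_def, hL] using hsingle

theorem Multiset.prod_map_eq_finsuppProd_toFinsupp {σ M : Type*} [DecidableEq σ] [CommMonoid M]
    (t : σ → M) (m : Multiset σ) :
    (m.map t).prod = (Multiset.toFinsupp m).prod fun v e => t v ^ e := by
  induction m using Multiset.induction_on with
  | empty => simp
  | cons a m ih =>
    rw [← Multiset.singleton_add, Multiset.toFinsupp_add,
      Finsupp.prod_add_index' (by simp) (fun _ _ _ => pow_add _ _ _),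
      Multiset.toFinsupp_singleton, Finsupp.prod_single_index (by simp)]
    simp [ih]

theorem linearIndependent_prod_map {ι σ : Type*} [Infinite F] {m : ι → Multiset σ}
    (hm : Function.Injective m) :
    LinearIndependent F fun i (t : σ → F) => ((m i).map t).prod := by
  classical
  let E : MvPolynomial σ F →ₗ[F] (σ → F) → F :=
    { toFun := fun p t => MvPolynomial.eval t p
      map_add' := fun p q => funext fun t => map_add _ p q
      map_smul' := fun c p => funext fun t => by simp }
  have hE : LinearMap.ker E = ⊥ :=
    LinearMap.ker_eq_bot.2 fun p q hpq => MvPolynomial.funext fun t => congrFun hpq t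
  have hmono := ((MvPolynomial.basisMonomials σ F).linearIndependent.comp _
    (Multiset.toFinsupp.injective.comp hm)).map' E hE
  have hfun : (fun i (t : σ → F) => ((m i).map t).prod) =
      E ∘ (MvPolynomial.basisMonomials σ F) ∘ Multiset.toFinsupp ∘ m := by
    funext i t
    simp [E, MvPolynomial.eval_monomial, Multiset.prod_map_eq_finsuppProd_toFinsupp]
  rw [hfun]
  exact hmono

end Separation

theorem WellQuasiOrdered.exists_finset_basis {α : Type*} {r : α → α → Prop}
    (hr : WellQuasiOrdered r) (Λ : Set α) : ∃ B : Finset α, ↑B ⊆ Λ ∧ ∀ x ∈ Λ, ∃ b ∈ B, r b x := by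
  by_contra! h
  obtain ⟨f, -, hf⟩ := exists_seq_of_forall_finset_exists (· ∈ Λ) (fun a b => ¬ r a b) h
  obtain ⟨m, n, hmn, hfmn⟩ := hr f
  exact hf m n hmn hfmn

namespace Multiset

variable {α : Type*}

def RenameLE (μ ν : Multiset α) : Prop := ∃ σ : α → α, μ.map σ ≤ ν

noncomputable def countList [DecidableEq α] (μ : Multiset α) : List (α × ℕ) :=
  μ.toFinset.toList.map fun a => (a, μ.count a)

theorem sum_map_countList [DecidableEq α] {β : Type*} (σ : α → β) (μ : Multiset α) :
    ((countList μ).map fun p => replicate p.2 (σ p.1)).sum = μ.map σ := by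
  rw [countList, List.map_map, Function.comp_def, Finset.sum_map_toList]
  conv_rhs => rw [← toFinset_sum_count_nsmul_eq μ, ← coe_mapAddMonoidHom, map_sum]
  simp [nsmul_singleton]

-- `σ` sends the first coordinate of each entry of `L₁` to that of its partner in `L₂`;
-- distinct first coordinates in `L₁` keep these choices compatible.
theorem exists_sum_le_of_sublistForall₂ {L₁ L₂ : List (α × ℕ)}
    (h : List.SublistForall₂ (Prod.snd ⁻¹'o (· ≤ ·)) L₁ L₂) (hL₁ : (L₁.map Prod.fst).Nodup) :
    ∃ σ : α → α,
      (L₁.map fun p => replicate p.2 (σ p.1)).sum ≤ (L₂.map fun q => replicate q.2 q.1).sum := by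
  induction h with
  | nil => exact ⟨id, by simp⟩
  | @cons p q l₁ l₂ hpq _ ih =>
    classical
    rw [List.map_cons, List.nodup_cons] at hL₁
    obtain ⟨σ, hσ⟩ := ih hL₁.2
    refine ⟨Function.update σ p.1 q.1, ?_⟩
    have htail : (l₁.map fun p' => replicate p'.2 (Function.update σ p.1 q.1 p'.1)) =
        l₁.map fun p' => replicate p'.2 (σ p'.1) :=
      List.map_congr_left fun p' hp' => by
        have hne : p'.1 ≠ p.1 := fun h => hL₁.1 (h ▸ List.mem_map_of_mem hp')
        rw [Function.update_of_ne hne]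
    simp only [List.map_cons, List.sum_cons, Function.update_self, htail]
    exact add_le_add ((replicate_le_replicate _).2 hpq) hσ
  | cons_right _ ih =>
    obtain ⟨σ, hσ⟩ := ih hL₁
    exact ⟨σ, hσ.trans (by simp)⟩

theorem wellQuasiOrdered_renameLE : WellQuasiOrdered (RenameLE (α := α)) := by
  classical
  intro f
  have hpairs : (Set.univ : Set (α × ℕ)).PartiallyWellOrderedOn (Prod.snd ⁻¹'o (· ≤ ·)) :=
    Set.partiallyWellOrderedOn_univ_iff.2 fun g => wellQuasiOrdered_le fun n => (g n).2
  obtain ⟨m, n, hmn, hsub⟩ := (hpairs.partiallyWellOrderedOn_sublistForall₂ _).exists_lt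
    (f := fun k => countList (f k)) fun _ _ _ => Set.mem_univ _
  obtain ⟨σ, hσ⟩ := exists_sum_le_of_sublistForall₂ hsub (by
    simpa [countList, Function.comp_def] using Finset.nodup_toList _)
  refine ⟨m, n, hmn, σ, ?_⟩
  rw [← sum_map_countList]
  simpa using hσ.trans_eq (sum_map_countList id (f n))

end Multiset

namespace GradedUT2

abbrev NormalIdx := ℕ ⊕ ℕ × Multiset ℕ

variable (F : Type) [Field F]

noncomputable def zv (i : ℕ) : FreeGLie F 2 := of F ((1 : ZMod 2), i)

noncomputable def zyWord (i : ℕ) (l : List ℕ) : FreeGLie F 2 :=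
  lnw F 2 (zv F i) (l.map (yv F 2))

noncomputable def canonWord (i : ℕ) (μ : Multiset ℕ) : FreeGLie F 2 :=
  zyWord F i (μ.sort (· ≤ ·))

noncomputable def yyComm : FreeGLie F 2 := ⁅yv F 2 0, yv F 2 1⁆

noncomputable def zzComm : FreeGLie F 2 := ⁅zv F 0, zv F 1⁆

noncomputable def normalMonomial : NormalIdx → FreeGLie F 2
  | .inl i => yv F 2 i
  | .inr (i, μ) => canonWord F i μ

def baseTIdeal : Set (FreeGLie F 2) := TClosure F 2 {yyComm F, zzComm F}

def varsOf : NormalIdx → Multiset (ZMod 2 × ℕ)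
  | .inl i => {(0, i)}
  | .inr (i, μ) => (1, i) ::ₘ μ.map ((0 : ZMod 2), ·)

variable {F}

theorem zyWord_append (i : ℕ) (l l' : List ℕ) :
    zyWord F i (l ++ l') = lnw F 2 (zyWord F i l) (l'.map (yv F 2)) := by
  rw [zyWord, List.map_append, lnw_append]; rfl

theorem zyWord_mem_homComp (i : ℕ) (l : List ℕ) : zyWord F i l ∈ homComp F 2 1 := by
  refine Submodule.subset_span ?_
  induction l using List.reverseRecOn with
  | nil => exact HomWord.of 1 i
  | append_singleton l a ih =>
    rw [zyWord_append]
    show HomWord F 2 1 ⁅zyWord F i l, yv F 2 a⁆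
    have h := HomWord.bracket ih (HomWord.of (F := F) (0 : ZMod 2) a)
    rwa [add_zero] at h

theorem lift_update_zyWord (i : ℕ) (l : List ℕ) (u : FreeGLie F 2) :
    lift F (Function.update (of F) (1, i) u) (zyWord F i l) = lnw F 2 u (l.map (yv F 2)) := by
  rw [zyWord, LieHom.map_lnw, zv, lift_of_apply, Function.update_self, List.map_map]
  congr 1
  refine List.map_congr_left fun a _ => ?_
  rw [Function.comp_apply, yv, lift_of_apply, Function.update_of_ne (by simp)]

noncomputable def renameY (σ : ℕ → ℕ) : ZMod 2 × ℕ → FreeGLie F 2 :=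
  fun p => of F (p.1, if p.1 = 0 then σ p.2 else p.2)

theorem isGradedSubst_renameY (σ : ℕ → ℕ) : IsGradedSubst F 2 (renameY σ) :=
  fun g _ => of_mem_homComp (g, _)

theorem lift_renameY_zyWord (σ : ℕ → ℕ) (i : ℕ) (l : List ℕ) :
    lift F (renameY σ) (zyWord F i l) = zyWord F i (l.map σ) := by
  rw [zyWord, LieHom.map_lnw, zv, lift_of_apply, List.map_map, zyWord, List.map_map]
  simp [renameY, zv, yv, lift_of_apply, Function.comp_def]

section TIdeal

variable {T : Set (FreeGLie F 2)} (hT : IsTIdeal F 2 T)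
include hT

theorem lie_mem_of_yyComm_mem (hyy : yyComm F ∈ T) {a b : FreeGLie F 2}
    (ha : a ∈ homComp F 2 0) (hb : b ∈ homComp F 2 0) : ⁅a, b⁆ ∈ T :=
  hT.lie_mem_of_lie_of_mem zero_ne_one hyy ha hb

theorem lie_mem_of_zzComm_mem (hzz : zzComm F ∈ T) {a b : FreeGLie F 2}
    (ha : a ∈ homComp F 2 1) (hb : b ∈ homComp F 2 1) : ⁅a, b⁆ ∈ T :=
  hT.lie_mem_of_lie_of_mem zero_ne_one hzz ha hb

theorem zyWord_sub_zyWord_mem_of_perm (hyy : yyComm F ∈ T) {l l' : List ℕ} (hl : l.Perm l')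
    (i : ℕ) : zyWord F i l - zyWord F i l' ∈ T := by
  obtain ⟨K, rfl⟩ := hT.isIdeal
  refine lnw_sub_lnw_mem_of_perm K (fun a ha b hb => lie_mem_of_yyComm_mem hT hyy ha hb)
    (hl.map _) ?_ _
  intro a ha
  obtain ⟨b, -, rfl⟩ := List.mem_map.1 ha
  exact of_mem_homComp ((0 : ZMod 2), b)

theorem canonWord_mem_of_renameLE (hyy : yyComm F ∈ T) {μ ν : Multiset ℕ}
    (hμν : μ.RenameLE ν) {i : ℕ} (hμ : canonWord F i μ ∈ T) (j : ℕ) : canonWord F j ν ∈ T := by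
  obtain ⟨σ, hσ⟩ := hμν
  have hrenamed : zyWord F i ((μ.sort (· ≤ ·)).map σ) ∈ T := by
    simpa [canonWord, lift_renameY_zyWord] using
      hT.substClosed _ (isGradedSubst_renameY σ) _ hμ
  have hprepended : zyWord F i ((ν - μ.map σ).sort (· ≤ ·) ++ (μ.sort (· ≤ ·)).map σ) ∈ T := by
    rw [zyWord_append]
    simpa [lift_update_zyWord] using hT.substClosed _
      (isGradedSubst_of.update (1, i) (zyWord_mem_homComp i _)) _ hrenamed
  have hperm : ((ν - μ.map σ).sort (· ≤ ·) ++ (μ.sort (· ≤ ·)).map σ).Perm (ν.sort (· ≤ ·)) := by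
    rw [← Multiset.coe_eq_coe, ← Multiset.coe_add, ← Multiset.map_coe, Multiset.sort_eq,
      Multiset.sort_eq, Multiset.sort_eq, tsub_add_cancel_of_le hσ]
  have hν : canonWord F i ν ∈ T :=
    (hT.mem_iff_of_sub_mem (zyWord_sub_zyWord_mem_of_perm hT hyy hperm i)).1 hprepended
  have hj := hT.substClosed _
    (isGradedSubst_of.update (1, i) (of_mem_homComp ((1 : ZMod 2), j))) _ hν
  rwa [canonWord, lift_update_zyWord] at hj

end TIdeal

theorem Lcomp_zero_le_range_diagonal :
    Lcomp F 2 0 ≤ LinearMap.range (Matrix.diagonalLinearMap (Fin 2) F F) := by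
  refine Submodule.span_le.2 ?_
  rintro _ ⟨i, j, -, hg, rfl⟩
  obtain rfl : i = j := by revert i j; decide
  exact ⟨Pi.single i 1, Matrix.diagonal_single i 1⟩

theorem Lcomp_one_le_span_single :
    Lcomp F 2 1 ≤ Submodule.span F {Matrix.single (0 : Fin 2) (1 : Fin 2) (1 : F)} := by
  refine Submodule.span_le.2 ?_
  rintro _ ⟨i, j, hij, hg, rfl⟩
  obtain ⟨rfl, rfl⟩ : i = 0 ∧ j = 1 := by revert i j; decide
  exact Submodule.subset_span rfl

theorem yyComm_mem_gradedId : yyComm F ∈ gradedId F 2 := by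
  intro v hv
  obtain ⟨d, hd⟩ := Lcomp_zero_le_range_diagonal (hv 0 0)
  obtain ⟨e, he⟩ := Lcomp_zero_le_range_diagonal (hv 0 1)
  rw [yyComm, LieHom.map_lie, yv, yv, lift_of_apply, lift_of_apply, ← hd, ← he]
  simp [Ring.lie_def, Matrix.diagonal_mul_diagonal, mul_comm]

theorem zzComm_mem_gradedId : zzComm F ∈ gradedId F 2 := by
  intro v hv
  obtain ⟨c, hc⟩ := Submodule.mem_span_singleton.1 (Lcomp_one_le_span_single (hv 1 0))
  obtain ⟨e, he⟩ := Submodule.mem_span_singleton.1 (Lcomp_one_le_span_single (hv 1 1))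
  have hsq : Matrix.single (0 : Fin 2) (1 : Fin 2) (1 : F) * Matrix.single 0 1 1 = 0 :=
    Matrix.single_mul_single_of_ne _ _ _ _ (by decide) _
  simp only [zzComm, zv, LieHom.map_lie, lift_of_apply, ← hc, ← he, Ring.lie_def,
    Matrix.smul_mul, Matrix.mul_smul, hsq, smul_zero, sub_self]

theorem isTIdeal_baseTIdeal : IsTIdeal F 2 (baseTIdeal F) := isTIdeal_TClosure _

theorem yyComm_mem_baseTIdeal : yyComm F ∈ baseTIdeal F := subset_TClosure _ (by simp)

theorem zzComm_mem_baseTIdeal : zzComm F ∈ baseTIdeal F := subset_TClosure _ (by simp)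

theorem baseTIdeal_subset {T : Set (FreeGLie F 2)} (hT : IsTIdeal F 2 T) (hyy : yyComm F ∈ T)
    (hzz : zzComm F ∈ T) : baseTIdeal F ⊆ T :=
  TClosure_subset hT (Set.insert_subset hyy (Set.singleton_subset_iff.2 hzz))

theorem lie_canonWord_yv_sub_mem (i : ℕ) (μ : Multiset ℕ) (a : ℕ) :
    ⁅canonWord F i μ, yv F 2 a⁆ - canonWord F i (a ::ₘ μ) ∈ baseTIdeal F := by
  have hperm : (μ.sort (· ≤ ·) ++ [a]).Perm ((a ::ₘ μ).sort (· ≤ ·)) := by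
    rw [← Multiset.coe_eq_coe, ← Multiset.coe_add, Multiset.sort_eq, Multiset.sort_eq,
      Multiset.coe_singleton, add_comm, Multiset.singleton_add]
  have h := zyWord_sub_zyWord_mem_of_perm isTIdeal_baseTIdeal (yyComm_mem_baseTIdeal (F := F))
    hperm i
  rwa [zyWord_append] at h

variable (F) in
def normalFormSubmodule : Submodule F (FreeGLie F 2) where
  carrier := {x | ∃ p ∈ Submodule.span F (Set.range (normalMonomial F)), x - p ∈ baseTIdeal F}
  add_mem' := by
    rintro x y ⟨p, hp, hxp⟩ ⟨q, hq, hyq⟩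
    refine ⟨p + q, add_mem hp hq, ?_⟩
    simpa [add_sub_add_comm] using isTIdeal_baseTIdeal.add_mem hxp hyq
  zero_mem' := ⟨0, zero_mem _, by simpa using isTIdeal_baseTIdeal.zero_mem⟩
  smul_mem' := by
    rintro c x ⟨p, hp, hxp⟩
    exact ⟨c • p, Submodule.smul_mem _ c hp, by
      simpa [smul_sub] using isTIdeal_baseTIdeal.smul_mem c hxp⟩

theorem lie_normalMonomial_mem_normalFormSubmodule (d e : NormalIdx) :
    ⁅normalMonomial F d, normalMonomial F e⁆ ∈ normalFormSubmodule F := by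
  have hw : ∀ d, normalMonomial F d ∈ Submodule.span F (Set.range (normalMonomial F)) :=
    fun d => Submodule.subset_span (Set.mem_range_self d)
  rcases d with a | ⟨i, μ⟩ <;> rcases e with b | ⟨j, ν⟩ <;> simp only [normalMonomial]
  · refine ⟨0, zero_mem _, ?_⟩
    rw [sub_zero]
    exact lie_mem_of_yyComm_mem isTIdeal_baseTIdeal yyComm_mem_baseTIdeal
      (of_mem_homComp ((0 : ZMod 2), a)) (of_mem_homComp ((0 : ZMod 2), b))
  · refine ⟨-canonWord F j (a ::ₘ ν), neg_mem (hw (.inr (j, a ::ₘ ν))), ?_⟩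
    convert isTIdeal_baseTIdeal.smul_mem (-1) (lie_canonWord_yv_sub_mem (F := F) j ν a) using 1
    rw [neg_one_smul, ← lie_skew]
    abel
  · exact ⟨_, hw (.inr (i, b ::ₘ μ)), lie_canonWord_yv_sub_mem i μ b⟩
  · refine ⟨0, zero_mem _, ?_⟩
    rw [sub_zero]
    exact lie_mem_of_zzComm_mem isTIdeal_baseTIdeal zzComm_mem_baseTIdeal
      (zyWord_mem_homComp i _) (zyWord_mem_homComp j _)

theorem lie_mem_normalFormSubmodule {x y : FreeGLie F 2} (hx : x ∈ normalFormSubmodule F)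
    (hy : y ∈ normalFormSubmodule F) : ⁅x, y⁆ ∈ normalFormSubmodule F := by
  obtain ⟨p, hp, hxp⟩ := hx
  obtain ⟨q, hq, hyq⟩ := hy
  have hspan : Submodule.map₂
      (LieModule.toEnd F (FreeGLie F 2) (FreeGLie F 2) : FreeGLie F 2 →ₗ[F] Module.End F _)
      (Submodule.span F (Set.range (normalMonomial F)))
      (Submodule.span F (Set.range (normalMonomial F))) ≤ normalFormSubmodule F := by
    rw [Submodule.map₂_span_span, Submodule.span_le]
    rintro _ ⟨_, ⟨d, rfl⟩, _, ⟨e, rfl⟩, rfl⟩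
    simpa using lie_normalMonomial_mem_normalFormSubmodule d e
  obtain ⟨r, hr, hpqr⟩ : ⁅p, q⁆ ∈ normalFormSubmodule F := by
    simpa using Submodule.map₂_le.1 hspan p hp q hq
  refine ⟨r, hr, ?_⟩
  have hdecomp : ⁅x, y⁆ - r = ⁅x - p, y⁆ + ⁅p, y - q⁆ + (⁅p, q⁆ - r) := by
    simp only [sub_lie, lie_sub]; abel
  rw [hdecomp]
  exact isTIdeal_baseTIdeal.add_mem (isTIdeal_baseTIdeal.add_mem
    (isTIdeal_baseTIdeal.lie_mem_left y hxp) (isTIdeal_baseTIdeal.lie_mem_right p hyq)) hpqr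

theorem exists_sub_mem_baseTIdeal (x : FreeGLie F 2) :
    ∃ c : NormalIdx →₀ F, x - Finsupp.linearCombination F (normalMonomial F) c ∈ baseTIdeal F := by
  let A : LieSubalgebra F (FreeGLie F 2) :=
    { normalFormSubmodule F with lie_mem' := lie_mem_normalFormSubmodule }
  have hA : A = ⊤ := by
    refine FreeLieAlgebra.eq_top_of_of_mem A fun ⟨g, i⟩ => ?_
    have hg : ∃ d, normalMonomial F d = of F (g, i) := by
      rcases (by decide : ∀ g : ZMod 2, g = 0 ∨ g = 1) g with rfl | rfl
      exacts [⟨.inl i, rfl⟩, ⟨.inr (i, 0), by simp [normalMonomial, canonWord, zyWord, lnw, zv]⟩]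
    obtain ⟨d, hd⟩ := hg
    exact ⟨_, Submodule.subset_span ⟨d, hd⟩, by simpa using isTIdeal_baseTIdeal.zero_mem⟩
  obtain ⟨p, hp, hxp⟩ : x ∈ A := hA ▸ LieSubalgebra.mem_top x
  rw [← Finsupp.range_linearCombination] at hp
  obtain ⟨c, rfl⟩ := hp
  exact ⟨c, hxp⟩

theorem varsOf_injective : Function.Injective varsOf := by
  rintro (a | ⟨i, μ⟩) (b | ⟨j, ν⟩) h <;> simp only [varsOf] at h
  · simpa using h
  · simpa using congrArg (((1 : ZMod 2), j) ∈ ·) h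
  · simpa using congrArg (((1 : ZMod 2), i) ∈ ·) h
  · obtain rfl : i = j := by simpa using congrArg (((1 : ZMod 2), i) ∈ ·) h
    rw [Multiset.cons_inj_right, Multiset.map_injective (Prod.mk_right_injective 0) |>.eq_iff] at h
    rw [h]

theorem lift_smul_of_normalMonomial (t : ZMod 2 × ℕ → F) (d : NormalIdx) :
    lift F (fun p => t p • of F p) (normalMonomial F d) =
      ((varsOf d).map t).prod • normalMonomial F d := by
  rcases d with a | ⟨i, μ⟩
  · simp [normalMonomial, varsOf, yv, lift_of_apply]
  · rw [normalMonomial, canonWord, zyWord, LieHom.map_lnw, zv, lift_of_apply, List.map_map]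
    have hy : (lift F (fun p => t p • of F p) ∘ yv F 2) = fun a => t (0, a) • yv F 2 a :=
      funext fun a => lift_of_apply _ _
    rw [hy, lnw_smul_map_smul]
    congr 1
    rw [varsOf, Multiset.map_cons, Multiset.prod_cons, Multiset.map_map, ← Multiset.prod_coe,
      ← Multiset.map_coe, Multiset.sort_eq]
    rfl

theorem smul_normalMonomial_mem [Infinite F] {J : Set (FreeGLie F 2)} (hJ : IsTIdeal F 2 J)
    {c : NormalIdx →₀ F} (hc : Finsupp.linearCombination F (normalMonomial F) c ∈ J)
    (d : NormalIdx) : c d • normalMonomial F d ∈ J := by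
  obtain ⟨K, rfl⟩ := hJ.isIdeal
  have hspan := smul_mem_span_range_of_linearIndependent
    (linearIndependent_prod_map varsOf_injective)
    (fun t => (lift F fun p => t p • of F p).toLinearMap) lift_smul_of_normalMonomial c d
  refine Submodule.span_le (p := K.toSubmodule).2 ?_ hspan
  rintro _ ⟨t, rfl⟩
  exact hJ.substClosed _ (fun g i => Submodule.smul_mem _ _ (of_mem_homComp (g, i))) _ hc

theorem subset_of_normalMonomial_mem [Infinite F] {J K : Set (FreeGLie F 2)}
    (hJ : IsTIdeal F 2 J) (hK : IsTIdeal F 2 K) (hJbase : baseTIdeal F ⊆ J)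
    (hKbase : baseTIdeal F ⊆ K) (hJK : ∀ d, normalMonomial F d ∈ J → normalMonomial F d ∈ K) :
    J ⊆ K := by
  intro x hx
  obtain ⟨c, hc⟩ := exists_sub_mem_baseTIdeal x
  have hcJ := (hJ.mem_iff_of_sub_mem (hJbase hc)).1 hx
  refine (hK.mem_iff_of_sub_mem (hKbase hc)).2 ?_
  obtain ⟨K, rfl⟩ := hK.isIdeal
  rw [Finsupp.linearCombination_apply, Finsupp.sum]
  refine sum_mem fun d _ => ?_
  by_cases hd : c d = 0
  · simp [hd]
  · have hdJ : normalMonomial F d ∈ J := by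
      simpa [smul_smul, inv_mul_cancel₀ hd] using
        hJ.smul_mem (c d)⁻¹ (smul_normalMonomial_mem hJ hcJ d)
    exact K.smul_mem _ (hJK d hdJ)

end GradedUT2

open GradedUT2 in
/-- (Specht property for `UT₂(F)⁽⁻⁾`, `F` infinite.) Every `T`-ideal `J`
containing the ideal `I` of `ZMod 2`-graded identities of `UT₂(F)⁽⁻⁾` is finitely generated
as a `T`-ideal. -/
theorem stmt2 (F : Type) [Field F] [Infinite F]
    (J : Set (FreeGLie F 2)) (hJ : IsTIdeal F 2 J) (hIJ : gradedId F 2 ⊆ J) :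
    ∃ S : Set (FreeGLie F 2), S.Finite ∧ J = TClosure F 2 S := by
  have hyy := hIJ yyComm_mem_gradedId
  have hzz := hIJ zzComm_mem_gradedId
  obtain ⟨B, hBJ, hB⟩ :=
    Multiset.wellQuasiOrdered_renameLE.exists_finset_basis {μ | canonWord F 0 μ ∈ J}
  set S := {yyComm F, zzComm F} ∪ ({yv F 2 0} ∩ J) ∪ canonWord F 0 '' B
  have hK := isTIdeal_TClosure S
  have hSK := subset_TClosure S
  refine ⟨S, ((Set.toFinite _).union ((Set.finite_singleton _).inter_of_left _)).union
    (B.finite_toSet.image _), subset_antisymm ?_ (TClosure_subset hJ ?_)⟩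
  · refine subset_of_normalMonomial_mem hJ hK (baseTIdeal_subset hJ hyy hzz)
      (baseTIdeal_subset hK (hSK (by simp [S])) (hSK (by simp [S]))) ?_
    rintro (i | ⟨i, μ⟩) hd
    · exact hK.of_mem_of_of_mem (hSK (Or.inl (Or.inr ⟨rfl, hJ.of_mem_of_of_mem hd 0⟩))) i
    · obtain ⟨ν, hνB, hνμ⟩ := hB μ (canonWord_mem_of_renameLE hJ hyy ⟨id, by simp⟩ hd 0)
      exact canonWord_mem_of_renameLE hK (hSK (by simp [S])) hνμ (hSK (Or.inr ⟨ν, hνB, rfl⟩)) i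
  · rintro _ (((rfl | rfl) | ⟨-, hJ0⟩) | ⟨ν, hνB, rfl⟩)
    exacts [hyy, hzz, hJ0, hBJ hνB]
end

section
/- Let F be an infinite field, and let z_1, z_2 be degree-1 variables and y_1,…,y_m degree-0 variables in the free Z_3-graded Lie algebra. For each subset S = {i_1 < … < i_t} of {1,…,m} with complement S^c = {i_{t+1} < … < i_m}, let c_S = [z_1, y_{i_1},…,y_{i_t}, z_2, y_{i_{t+1}},…,y_{i_m}] (left-normed). Then the commutators c_S, over all subsets S of {1,…,m}, are linearly independent modulo the ideal of Z_3-graded identities of UT_3(F)^{(-)} with its canonical Z_3-grading: no nontrivial F-linear combination of them is a Z_3-graded identity of UT_3(F)^{(-)}. -/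
open FreeLieAlgebra

attribute [local instance 100] LieRing.ofAssociativeRing

/-- For a subset `S = {i₁ < … < i_t}` of `{1,…,m}` with complement
`Sᶜ = {i_{t+1} < … < i_m}`, the left-normed commutator
`c_S = [z₁, y_{i₁},…,y_{i_t}, z₂, y_{i_{t+1}},…,y_{i_m}]`, where `z₁, z₂` are the degree-1
variables `(1,0)`, `(1,1)` and the `y_i` are degree-0 variables. -/
noncomputable def cS (F : Type) [Field F] (m : ℕ) (S : Finset (Fin m)) : FreeGLie F 3 :=
  lnw F 3 (FreeLieAlgebra.of F ((1 : ZMod 3), 0))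
    (((S.sort (· ≤ ·)).map fun i => yv F 3 i.val) ++ [FreeLieAlgebra.of F ((1 : ZMod 3), 1)] ++
      ((Sᶜ.sort (· ≤ ·)).map fun i => yv F 3 i.val))

/-!
Substitute `z₁ ↦ e₁₂`, `z₂ ↦ e₂₃` and `y_i ↦ diag(0, a_i, b_i)`. Both `e₁₂` and `e₁₃` are
eigenvectors of `ad` of every diagonal matrix, with eigenvalues `a_i` and `b_i`, so `c_S`
evaluates to `(∏_{i ∈ S} a_i ∏_{i ∉ S} b_i) e₁₃`. Taking for `a` the indicator function of a
fixed `S₀` and for `b` that of its complement makes this `e₁₃` for `S = S₀` and `0` otherwise,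
so a linear combination `∑ λ_S c_S` evaluates to `λ_{S₀} e₁₃`.
-/

namespace LieHom

variable {R L M : Type*} [CommRing R] [LieRing L] [LieAlgebra R L] [LieRing M] [LieAlgebra R M]

theorem map_foldl_lie (f : L →ₗ⁅R⁆ M) (l : List L) (x : L) :
    f (l.foldl (fun a b => ⁅a, b⁆) x) = (l.map f).foldl (fun a b => ⁅a, b⁆) (f x) := by
  induction l generalizing x with
  | nil => rfl
  | cons y l ih => simp only [List.foldl_cons, List.map_cons, ih, map_lie]

end LieHom

theorem List.foldl_lie_map_of_lie_eq_smul {R L ι : Type*} [CommRing R] [LieRing L]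
    [LieAlgebra R L] (x : L) (f : ι → L) (μ : ι → R) (hx : ∀ i, ⁅x, f i⁆ = μ i • x)
    (l : List ι) (r : R) :
    (l.map f).foldl (fun a b => ⁅a, b⁆) (r • x) = (r * (l.map μ).prod) • x := by
  induction l generalizing r with
  | nil => simp
  | cons i l ih =>
    rw [List.map_cons, List.foldl_cons, smul_lie, hx, smul_smul, ih, List.map_cons,
      List.prod_cons, mul_assoc]

theorem Finset.prod_map_sort {α M : Type*} [CommMonoid M] (s : Finset α) (r : α → α → Prop)
    [DecidableRel r] [IsTrans α r] [Std.Antisymm r] [Std.Total r] (f : α → M) :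
    ((s.sort r).map f).prod = ∏ i ∈ s, f i := by
  rw [← Finset.prod_map_toList]
  exact ((Finset.sort_perm_toList s _).map f).prod_eq

theorem Finset.prod_boole_mul_prod_compl_boole {α M : Type*} [Fintype α] [DecidableEq α]
    [CommMonoidWithZero M] (s t : Finset α) :
    (∏ i ∈ s, if i ∈ t then (1 : M) else 0) * ∏ i ∈ sᶜ, (if i ∉ t then (1 : M) else 0) =
      if s = t then 1 else 0 := by
  simp only [Finset.prod_boole, ite_zero_mul_ite_zero, mul_one, Finset.mem_compl, not_imp_not,
    ← Finset.subset_iff, ← Finset.Subset.antisymm_iff]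

namespace Matrix

variable {n R : Type*} [Fintype n] [DecidableEq n] [CommRing R]

theorem single_lie_diagonal (i j : n) (c : R) (d : n → R) :
    ⁅single i j c, diagonal d⁆ = (d j - d i) • single i j c := by
  ext a b
  simp only [Ring.lie_def, sub_apply, smul_apply, mul_diagonal, diagonal_mul, single_apply]
  split_ifs with h
  · obtain ⟨rfl, rfl⟩ := h
    ring
  · simp

theorem single_lie_single_of_ne {i k : n} (j : n) (h : i ≠ k) :
    ⁅single i j (1 : R), single j k (1 : R)⁆ = single i k 1 := by
  rw [Ring.lie_def, single_mul_single_same, single_mul_single_of_ne (h := h.symm), mul_one,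
    sub_zero]

end Matrix

section GradedUT

variable {F : Type} [Field F]

open Matrix

theorem single_mem_Lcomp {n : ℕ} {g : ZMod n} {i j : Fin n} (hij : i ≤ j)
    (hg : ((j : ℕ) : ZMod n) - ((i : ℕ) : ZMod n) = g) : single i j (1 : F) ∈ Lcomp F n g :=
  Submodule.subset_span ⟨i, j, hij, hg, rfl⟩

theorem diagonal_mem_Lcomp_zero {n : ℕ} (d : Fin n → F) : diagonal d ∈ Lcomp F n 0 := by
  rw [← sum_single_eq_diagonal]
  refine Submodule.sum_mem _ fun i _ => ?_
  simpa [smul_single] using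
    Submodule.smul_mem _ (d i) (single_mem_Lcomp (F := F) le_rfl (sub_self _))

def ut3Subst (a b : ℕ → F) : ZMod 3 × ℕ → Matrix (Fin 3) (Fin 3) F := fun p =>
  if p.1 = 0 then diagonal ![0, a p.2, b p.2]
  else if p = (1, 0) then single 0 1 1
  else if p = (1, 1) then single 1 2 1
  else 0

theorem ut3Subst_mem (a b : ℕ → F) (g : ZMod 3) (i : ℕ) :
    ut3Subst a b (g, i) ∈ Lcomp F 3 g := by
  unfold ut3Subst
  split_ifs with h₀ h₁ h₂
  · rw [show g = 0 from h₀]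
    exact diagonal_mem_Lcomp_zero _
  · obtain ⟨rfl, -⟩ := Prod.mk.inj h₁
    exact single_mem_Lcomp (by decide) (by decide)
  · obtain ⟨rfl, -⟩ := Prod.mk.inj h₂
    exact single_mem_Lcomp (by decide) (by decide)
  · exact zero_mem _

theorem lift_ut3Subst_cS (a b : ℕ → F) {m : ℕ} (S : Finset (Fin m)) :
    FreeLieAlgebra.lift F (ut3Subst a b) (cS F m S) =
      ((∏ i ∈ S, a i) * ∏ i ∈ Sᶜ, b i) • single 0 2 1 := by
  have hz₁ :
      FreeLieAlgebra.lift F (ut3Subst a b) (FreeLieAlgebra.of F (1, 0)) = single 0 1 1 := by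
    simp [ut3Subst]
  have hz₂ :
      FreeLieAlgebra.lift F (ut3Subst a b) (FreeLieAlgebra.of F (1, 1)) = single 1 2 1 := by
    simp [ut3Subst]
  have hy : (FreeLieAlgebra.lift F (ut3Subst a b) ∘ fun i : Fin m => yv F 3 i) =
      fun i : Fin m => diagonal ![0, a i, b i] := by
    ext1 i
    simp [ut3Subst, yv]
  rw [cS, lnw, LieHom.map_foldl_lie]
  simp only [List.map_append, List.foldl_append, List.map_map, hy, hz₁, List.map_cons,
    List.map_nil, hz₂, List.foldl_cons, List.foldl_nil]
  rw [← one_smul F (single 0 1 1),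
    List.foldl_lie_map_of_lie_eq_smul _ _ (fun i : Fin m => a i), smul_lie,
    single_lie_single_of_ne _ (by decide),
    List.foldl_lie_map_of_lie_eq_smul _ _ (fun i : Fin m => b i),
    Finset.prod_map_sort, Finset.prod_map_sort, one_mul]
  all_goals intro i; rw [single_lie_diagonal]; simp

end GradedUT

theorem stmt6_general (F : Type) [Field F] (m : ℕ) (c : Finset (Fin m) → F)
    (h : (∑ S : Finset (Fin m), c S • cS F m S) ∈ gradedId F 3) :
    ∀ S, c S = 0 := by
  intro S₀
  let T := S₀.map Fin.valEmbedding
  have hT (i : Fin m) : (i : ℕ) ∈ T ↔ i ∈ S₀ := Finset.mem_map' Fin.valEmbedding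
  have hv := h (ut3Subst (fun i => if i ∈ T then 1 else 0) (fun i => if i ∉ T then 1 else 0))
    (ut3Subst_mem _ _)
  simp only [map_sum, map_smul, lift_ut3Subst_cS, smul_smul, hT,
    Finset.prod_boole_mul_prod_compl_boole, mul_ite, mul_one, mul_zero, ← Finset.sum_smul,
    Finset.sum_ite_eq', Finset.mem_univ, if_true] at hv
  simpa using congrFun (congrFun hv 0) 2

/-- The commutators `c_S`, over all subsets `S` of `{1,…,m}`, are linearly
independent modulo the ideal of `ZMod 3`-graded identities of `UT₃(F)⁽⁻⁾`: no nontrivial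
`F`-linear combination of them is a graded identity of `UT₃(F)⁽⁻⁾`. -/
theorem stmt6 (F : Type) [Field F] [Infinite F] (m : ℕ) (c : Finset (Fin m) → F)
    (h : (∑ S : Finset (Fin m), c S • cS F m S) ∈ gradedId F 3) :
    ∀ S, c S = 0 :=
  stmt6_general F m c h
end

section
/- Let F be an infinite field, n ≥ 2, and I = T_{Z_n}(UT_n(F)^{(-)}) the ideal of Z_n-graded identities of UT_n(F)^{(-)} with its canonical Z_n-grading. Let z_1,…,z_k be variables of nonzero degrees g_1,…,g_k ∈ Z_n with g_1 + ⋯ + g_k ≤ n − 1 (as integers in {1,…,n−1}), and let y, y_1,…,y_k be degree-0 variables. Set f = [z_1, y_1, z_2, y_2, …, z_k, y_k] (left-normed). Then for each 1 ≤ i ≤ k, the polynomial g = [z_1, y_1, …, z_{i−1}, y_{i−1}, z_i, y, y_i, z_{i+1}, …, z_k, y_k] lies in ⟨{f} ∪ I⟩, the smallest T_{Z_n}-ideal containing f and I. -/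
open FreeLieAlgebra

attribute [local instance 100] LieRing.ofAssociativeRing

/-- The variable `z_j` of nonzero degree `g j` (the `j`-th of the `k+1` fixed variables of
nonzero degree; distinct `j` give distinct variables). -/
noncomputable def zvG (F : Type) [Field F] (n k : ℕ) (g : Fin (k + 1) → ZMod n)
    (j : Fin (k + 1)) : FreeGLie F n :=
  FreeLieAlgebra.of F (g j, j.val)

/-- The left-normed commutator `[z₁, w₁, z₂, w₂, …, z_{k+1}, w_{k+1}]`, where `w_j` is an
arbitrary finite list of entries inserted after `z_j`. -/
noncomputable def chainIns (F : Type) [Field F] (n k : ℕ) (g : Fin (k + 1) → ZMod n)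
    (ins : Fin (k + 1) → List (FreeGLie F n)) : FreeGLie F n :=
  lnw F n (zvG F n k g 0)
    ((List.finRange (k + 1)).flatMap fun j =>
      (if j = 0 then [] else [zvG F n k g j]) ++ ins j)

/-!
Every letter of `f` is a distinct variable, and `ad y` is a derivation. Hence inserting `y`
right after `z_i` expands, by the Jacobi identity, into the sum of the words obtained from `f`
by replacing a single letter `a` standing before the insertion point (the leading `z_1`
included) by `⁅a, y⁆`. Since `y` has degree `0`, each of these words is the image of `f` under
the grading-preserving substitution `a ↦ ⁅a, y⁆`, so `g` already lies in the `T`-ideal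
generated by `f`.
-/

section LeftNormed

variable {L : Type*} [LieRing L]

def leftNormed (x : L) (l : List L) : L := l.foldl (fun a b => ⁅a, b⁆) x

@[simp] lemma leftNormed_nil (x : L) : leftNormed x [] = x := rfl

@[simp] lemma leftNormed_cons (x a : L) (l : List L) :
    leftNormed x (a :: l) = leftNormed ⁅x, a⁆ l := rfl

lemma leftNormed_add (x x' : L) (l : List L) :
    leftNormed (x + x') l = leftNormed x l + leftNormed x' l := by
  induction l generalizing x x' with
  | nil => rfl
  | cons a l ih => simp only [leftNormed_cons, add_lie, ih]

lemma leftNormed_append_cons (x y : L) (u v : List L) :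
    leftNormed x (u ++ y :: v) = leftNormed ⁅x, y⁆ (u ++ v) +
      ∑ q ∈ Finset.range u.length, leftNormed x ((u ++ v).modify q (⁅·, y⁆)) := by
  induction u generalizing x with
  | nil => simp
  | cons a u ih =>
    have jacobi : ⁅⁅x, a⁆, y⁆ = ⁅⁅x, y⁆, a⁆ + ⁅x, ⁅a, y⁆⁆ := by
      rw [leibniz_lie, ← lie_skew a ⁅x, y⁆]
      abel
    simp only [List.cons_append, leftNormed_cons, ih, jacobi, leftNormed_add, List.length_cons,
      Finset.sum_range_succ', List.modify_succ_cons, List.modify_zero_cons]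
    abel

end LeftNormed

lemma LieHom.map_leftNormed {R L L' : Type*} [CommRing R] [LieRing L] [LieAlgebra R L]
    [LieRing L'] [LieAlgebra R L'] (φ : L →ₗ⁅R⁆ L') (x : L) (l : List L) :
    φ (leftNormed x l) = leftNormed (φ x) (l.map φ) := by
  induction l generalizing x with
  | nil => rfl
  | cons a l ih => simp only [leftNormed_cons, LieHom.map_lie, ih, List.map_cons]

lemma List.Nodup.map_update_getElem {α β : Type*} [DecidableEq α] {l : List α} (hl : l.Nodup)
    (f : α → β) (h : β → β) {q : ℕ} (hq : q < l.length) :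
    l.map (Function.update f l[q] (h (f l[q]))) = (l.map f).modify q h := by
  induction l generalizing q with
  | nil => simp at hq
  | cons a l ih =>
    obtain ⟨ha, hl⟩ := List.nodup_cons.mp hl
    cases q with
    | zero =>
      simp only [List.getElem_cons_zero, List.map_cons, Function.update_self,
        List.modify_zero_cons, List.cons.injEq, true_and]
      exact List.map_congr_left fun b hb => Function.update_of_ne (ne_of_mem_of_not_mem hb ha) _ _
    | succ q =>
      have hq : q < l.length := Nat.lt_of_succ_lt_succ hq
      have hne : a ≠ l[q] := fun h => ha (h ▸ List.getElem_mem hq)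
      simp only [List.getElem_cons_succ, List.map_cons, Function.update_of_ne hne,
        List.modify_succ_cons, ih hl hq]

section FreeLieAlgebra

variable {R X : Type*} [CommRing R]

lemma FreeLieAlgebra.lift_leftNormed_of {L : Type*} [LieRing L] [LieAlgebra R L] (σ : X → L)
    (x₀ : X) (vs : List X) :
    lift R σ (leftNormed (of R x₀) (vs.map (of R))) = leftNormed (σ x₀) (vs.map σ) := by
  rw [LieHom.map_leftNormed, List.map_map, lift_of_apply]
  congr 1
  exact List.map_congr_left fun v _ => lift_of_apply σ v

variable [DecidableEq X]

lemma FreeLieAlgebra.lift_update_leftNormed_self {x₀ : X} {vs : List X} (hx₀ : x₀ ∉ vs)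
    (c : FreeLieAlgebra R X) :
    lift R (Function.update (of R) x₀ ⁅of R x₀, c⁆)
        (leftNormed (of R x₀) (vs.map (of R))) =
      leftNormed ⁅of R x₀, c⁆ (vs.map (of R)) := by
  rw [lift_leftNormed_of, Function.update_self]
  congr 1
  exact List.map_congr_left fun v hv => Function.update_of_ne (ne_of_mem_of_not_mem hv hx₀) _ _

lemma FreeLieAlgebra.lift_update_leftNormed_getElem {x₀ : X} {vs : List X}
    (hvs : (x₀ :: vs).Nodup) (c : FreeLieAlgebra R X) {q : ℕ} (hq : q < vs.length) :
    lift R (Function.update (of R) vs[q] ⁅of R vs[q], c⁆)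
        (leftNormed (of R x₀) (vs.map (of R))) =
      leftNormed (of R x₀) ((vs.map (of R)).modify q (⁅·, c⁆)) := by
  obtain ⟨hx₀, hvs⟩ := List.nodup_cons.mp hvs
  rw [lift_leftNormed_of, hvs.map_update_getElem (of R) (⁅·, c⁆) hq,
    Function.update_of_ne (ne_of_mem_of_not_mem (List.getElem_mem hq) hx₀).symm]

end FreeLieAlgebra

lemma isGradedSubst_update_lie (F : Type) [Field F] (n : ℕ) (v : ZMod n × ℕ)
    {c : FreeGLie F n} (hc : HomWord F n 0 c) :
    IsGradedSubst F n (Function.update (FreeLieAlgebra.of F) v ⁅FreeLieAlgebra.of F v, c⁆) := by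
  intro d m
  by_cases hv : (d, m) = v
  · subst hv
    rw [Function.update_self]
    exact Submodule.subset_span (by simpa using HomWord.bracket (HomWord.of d m) hc)
  · rw [Function.update_of_ne hv]
    exact Submodule.subset_span (HomWord.of d m)

lemma List.exists_flatMap_eq_of_forall_ne {ι α : Type*} {l : List ι} (hl : l.Nodup) {i : ι}
    (hi : i ∈ l) {B B' : ι → List α} (hB : ∀ j, j ≠ i → B j = B' j) :
    ∃ P Q, l.flatMap B = P ++ B i ++ Q ∧ l.flatMap B' = P ++ B' i ++ Q := by
  obtain ⟨s, t, rfl⟩ := List.append_of_mem hi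
  have hst := List.nodup_middle.mp hl
  obtain ⟨his, -⟩ := List.nodup_cons.mp hst
  refine ⟨s.flatMap B, t.flatMap B, by simp, ?_⟩
  have hs : s.flatMap B' = s.flatMap B :=
    List.flatMap_congr fun j hj => (hB j fun h => his (h ▸ List.mem_append_left t hj)).symm
  have ht : t.flatMap B' = t.flatMap B :=
    List.flatMap_congr fun j hj => (hB j fun h => his (h ▸ List.mem_append_right s hj)).symm
  simp [hs, ht]

def chainVars (n k : ℕ) (g : Fin (k + 1) → ZMod n)
    (insv : Fin (k + 1) → List (ZMod n × ℕ)) : List (ZMod n × ℕ) :=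
  (List.finRange (k + 1)).flatMap fun j => (if j = 0 then [] else [(g j, j.val)]) ++ insv j

lemma chainIns_eq_leftNormed (F : Type) [Field F] (n k : ℕ) (g : Fin (k + 1) → ZMod n)
    {ins : Fin (k + 1) → List (FreeGLie F n)} {insv : Fin (k + 1) → List (ZMod n × ℕ)}
    (hins : ∀ j, ins j = (insv j).map (of F)) :
    chainIns F n k g ins = leftNormed (of F (g 0, 0)) ((chainVars n k g insv).map (of F)) := by
  simp only [chainIns, chainVars, List.map_flatMap]
  congr 1
  refine List.flatMap_congr fun j _ => ?_
  split_ifs <;> simp [hins, zvG]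

lemma nodup_chainVars {n k : ℕ} {g : Fin (k + 1) → ZMod n} (hg : ∀ j, g j ≠ 0) :
    ((g 0, 0) :: chainVars n k g fun j => [(0, j.val)]).Nodup := by
  refine List.nodup_cons.mpr ⟨?_, List.nodup_flatMap.mpr ⟨fun j _ => ?_, ?_⟩⟩
  · simp only [chainVars, List.mem_flatMap, List.mem_finRange, true_and, not_exists]
    intro j
    split_ifs with hj <;> simp [Prod.ext_iff, hg 0, eq_comm (a := (0 : ℕ)), hj]
  · split_ifs <;> simp [hg j]
  · have hsnd : ∀ j : Fin (k + 1),
        ∀ p ∈ (if j = 0 then [] else [(g j, j.val)]) ++ [(0, j.val)], p.2 = j.val := by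
      intro j p hp
      split_ifs at hp <;> simp at hp <;> rcases hp with rfl | rfl <;> rfl
    exact (List.nodup_finRange (k + 1)).pairwise_of_forall_ne fun j _ j' _ hjj' =>
      List.disjoint_left.mpr fun {p} hp hp' =>
        hjj' (Fin.ext ((hsnd j p hp).symm.trans (hsnd j' p hp')))

lemma exists_split_chainVars (n k : ℕ) (g : Fin (k + 1) → ZMod n) (i : Fin (k + 1)) (m : ℕ) :
    ∃ us ws, chainVars n k g (fun j => [(0, j.val)]) = us ++ ws ∧
      chainVars n k g (fun j => if j = i then [(0, m), (0, j.val)] else [(0, j.val)]) =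
        us ++ (0, m) :: ws := by
  obtain ⟨P, Q, hP, hQ⟩ := List.exists_flatMap_eq_of_forall_ne (List.nodup_finRange (k + 1))
    (List.mem_finRange i)
    (B := fun j => (if j = 0 then [] else [(g j, j.val)]) ++ [((0 : ZMod n), j.val)])
    (B' := fun j => (if j = 0 then [] else [(g j, j.val)]) ++
      if j = i then [(0, m), (0, j.val)] else [(0, j.val)])
    (fun j hj => by simp [hj])
  refine ⟨P ++ (if i = 0 then [] else [(g i, i.val)]), (0, i.val) :: Q, ?_, ?_⟩
  · simp [chainVars, hP]
  · simp [chainVars, hQ]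

theorem stmt13_general (F : Type) [Field F] (n k : ℕ)
    (g : Fin (k + 1) → ZMod n) (hg : ∀ j, g j ≠ 0)
    (i : Fin (k + 1)) :
    chainIns F n k g
        (fun j => if j = i then [yv F n (k + 1), yv F n j.val] else [yv F n j.val]) ∈
      TClosure F n
        ({chainIns F n k g (fun j => [yv F n j.val])} ∪ gradedId F n) := by
  rintro T ⟨hT, hfT⟩
  obtain ⟨J, rfl⟩ := hT.isIdeal
  obtain ⟨us, ws, hf, hgi⟩ := exists_split_chainVars n k g i (k + 1)
  have hnd : ((g 0, 0) :: (us ++ ws)).Nodup := hf ▸ nodup_chainVars hg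
  have hsubst : ∀ v, lift F (Function.update (of F) v ⁅of F v, yv F n (k + 1)⁆)
      (leftNormed (of F (g 0, 0)) ((us ++ ws).map (of F))) ∈ J := by
    intro v
    refine hT.substClosed _ (isGradedSubst_update_lie F n v (HomWord.of 0 (k + 1))) _ ?_
    rw [← hf, ← chainIns_eq_leftNormed F n k g fun j => rfl]
    exact hfT (Or.inl rfl)
  rw [chainIns_eq_leftNormed F n k g (insv := fun j => if j = i then [(0, k + 1), (0, j.val)]
      else [(0, j.val)]) fun j => by split_ifs <;> rfl, hgi, List.map_append, List.map_cons,
    leftNormed_append_cons, ← List.map_append]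
  refine add_mem ?_ (sum_mem fun q hq => ?_)
  · rw [← lift_update_leftNormed_self (List.nodup_cons.mp hnd).1]
    exact hsubst _
  · have hq' : q < (us ++ ws).length := by
      rw [Finset.mem_range, List.length_map] at hq
      rw [List.length_append]
      omega
    rw [← lift_update_leftNormed_getElem hnd _ hq']
    exact hsubst _

/-- Let `z₁,…,z_{k+1}` have nonzero degrees `g₁,…,g_{k+1}` with
`g₁ + ⋯ + g_{k+1} ≤ n - 1` (as integers in `{1,…,n-1}`), and let
`f = [z₁, y₁, z₂, y₂, …, z_{k+1}, y_{k+1}]`. Then for each `i`, the polynomial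
`g = [z₁, y₁, …, z_{i-1}, y_{i-1}, z_i, y, y_i, z_{i+1}, …, z_{k+1}, y_{k+1}]` obtained by
inserting a fresh degree-0 variable `y` right after `z_i` lies in the smallest `T`-ideal
containing `f` and the ideal `I` of `ZMod n`-graded identities of `UT_n(F)⁽⁻⁾`.
(Here `y_j` is the degree-0 variable with index `j` and `y` the one with index `k+1`.) -/
theorem stmt13 (F : Type) [Field F] [Infinite F] (n k : ℕ) (hn : 2 ≤ n)
    (g : Fin (k + 1) → ZMod n) (hg : ∀ j, g j ≠ 0)
    (hsum : ∑ j, (g j).val ≤ n - 1) (i : Fin (k + 1)) :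
    chainIns F n k g
        (fun j => if j = i then [yv F n (k + 1), yv F n j.val] else [yv F n j.val]) ∈
      TClosure F n
        ({chainIns F n k g (fun j => [yv F n j.val])} ∪ gradedId F n) :=
  stmt13_general F n k g hg i
end
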